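/- arXiv:2403.19834 — 2 statements merged into one kernel-verified Lean document; each statement's English description precedes it below -/
import Mathlib

section
/- Consider the queue protocol: each of N agents keeps a queue q_{i,k} ∈ ℝ^τ; at every iteration k ≥ 0 all agents simultaneously replace q_{i,k}(l) by Σ_{j=1}^N W_{ij}·q_{j,k}(l) for every slot l = 1,…,τ, then append a_k(i) as the (τ+1)-st entry to form q^{(1)}_{i,k} ∈ ℝ^{τ+1}, and finally set q_{i,k+1} equal to q^{(1)}_{i,k} with its first entry removed. Then for every iteration k ≥ τ and every agent i, the first entry of q^{(1)}_{i,k} equals Σ_{j=1}^N (W^τ)_{ij} · a_{k−τ}(j); i.e., the head of the queue is the τ-step W-average of the values appended τ iterations earlier. -/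
/-!
Track one value through the queue: the entry sitting in slot `τ - n` at iteration `k - τ + n`
moves to slot `τ - n - 1` one iteration later and is multiplied by `W` on the way. Starting from
`a_{k-τ}`, appended in the last slot at iteration `k - τ`, after `τ` steps it reaches the head
as `W^τ a_{k-τ}`.
-/

open Matrix

theorem Matrix.mulVec_pow_eq_of_succ_eq {ι R : Type*} [Fintype ι] [DecidableEq ι] [Semiring R]
    (W : Matrix ι ι R) (x : ℕ → ι → R) (m : ℕ) (hx : ∀ n < m, x (n + 1) = W *ᵥ x n) :
    x m = (W ^ m) *ᵥ x 0 := by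
  induction m with
  | zero => rw [pow_zero, one_mulVec]
  | succ m ih =>
    rw [hx m m.lt_succ_self, ih fun n hn => hx n (hn.trans m.lt_succ_self), mulVec_mulVec,
      ← pow_succ']

section QueueProtocol

variable {ι R : Type*} [Fintype ι] [NonUnitalNonAssocSemiring R] {τ : ℕ} (W : Matrix ι ι R)
  (a : ℕ → ι → R) (q : ℕ → ι → Fin τ → R) (q1 : ℕ → ι → Fin (τ + 1) → R)

theorem queue_last_eq (hq1 : ∀ k i, q1 k i = Fin.snoc (fun l => ∑ j, W i j * q k j l) (a k i))
    (k : ℕ) : (fun i => q1 k i (Fin.last τ)) = a k := by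
  funext i
  rw [hq1, Fin.snoc_last]

theorem queue_castSucc_eq_mulVec_succ
    (hq1 : ∀ k i, q1 k i = Fin.snoc (fun l => ∑ j, W i j * q k j l) (a k i))
    (hq : ∀ k i l, q (k + 1) i l = q1 k i l.succ) (k : ℕ) (l : Fin τ) :
    (fun i => q1 (k + 1) i l.castSucc) = W *ᵥ fun j => q1 k j l.succ := by
  funext i
  simp only [hq1 (k + 1), Fin.snoc_castSucc, hq, mulVec, dotProduct]

end QueueProtocol

theorem queue_protocol_head_eq_general
    (N τ : ℕ)
    (W : Matrix (Fin N) (Fin N) ℝ)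
    (a : ℕ → Fin N → ℝ)
    (q : ℕ → Fin N → Fin τ → ℝ)
    (q1 : ℕ → Fin N → Fin (τ + 1) → ℝ)
    -- at iteration `k`, each slot of the queue is `W`-averaged and `a_k(i)` is appended
    (hq1 : ∀ k i, q1 k i = Fin.snoc (fun l => ∑ j, W i j * q k j l) (a k i))
    -- the next queue is the augmented queue with its first entry removed
    (hq : ∀ k i l, q (k + 1) i l = q1 k i l.succ) :
    ∀ k, τ ≤ k → ∀ i, q1 k i 0 = ∑ j, (W ^ τ) i j * a (k - τ) j := by
  intro k hk i
  let x : ℕ → Fin N → ℝ := fun n j => q1 (k - τ + n) j ⟨τ - n, by omega⟩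
  have hx : ∀ n < τ, x (n + 1) = W *ᵥ x n := by
    intro n hn
    have hslot : (⟨τ - (n + 1), by omega⟩ : Fin τ).succ = ⟨τ - n, by omega⟩ :=
      Fin.ext (show τ - (n + 1) + 1 = τ - n by omega)
    have hstep :=
      queue_castSucc_eq_mulVec_succ W a q q1 hq1 hq (k - τ + n) ⟨τ - (n + 1), by omega⟩
    rwa [hslot] at hstep
  have hx0 : x 0 = a (k - τ) := queue_last_eq W a q q1 hq1 (k - τ)
  have hxτ : x τ = fun j => q1 k j 0 := by
    funext j
    simp only [x, Nat.sub_self, Nat.sub_add_cancel hk]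
    rfl
  calc q1 k i 0 = x τ i := by rw [hxτ]
    _ = (W ^ τ *ᵥ x 0) i := by rw [mulVec_pow_eq_of_succ_eq W x τ hx]
    _ = ∑ j, (W ^ τ) i j * a (k - τ) j := by rw [hx0]; rfl

/-- The head of the queue in the consensus protocol of Algorithm 1 is the `τ`-step
`W`-average of the values appended `τ` iterations earlier. -/
theorem queue_protocol_head_eq
    (N τ : ℕ) (hN : 1 ≤ N) (hτ : 1 ≤ τ)
    (W : Matrix (Fin N) (Fin N) ℝ)
    (a : ℕ → Fin N → ℝ)
    (q : ℕ → Fin N → Fin τ → ℝ)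
    (q1 : ℕ → Fin N → Fin (τ + 1) → ℝ)
    -- at iteration `k`, each slot of the queue is `W`-averaged and `a_k(i)` is appended
    (hq1 : ∀ k i, q1 k i = Fin.snoc (fun l => ∑ j, W i j * q k j l) (a k i))
    -- the next queue is the augmented queue with its first entry removed
    (hq : ∀ k i l, q (k + 1) i l = q1 k i l.succ) :
    ∀ k, τ ≤ k → ∀ i, q1 k i 0 = ∑ j, (W ^ τ) i j * a (k - τ) j :=
  queue_protocol_head_eq_general N τ W a q q1 hq1 hq
end

section
/- Let ζ : ℝ^N → ℝ be L₀-Lipschitz and let δ > 0. Then the Gaussian smoothing ζ_δ(u) = E_{v∼N(0,I_N)}[ζ(u + δv)] is differentiable on ℝ^N and its gradient satisfies ∇ζ_δ(u) = (1/δ)·E_{v∼N(0,I_N)}[ζ(u + δv)·v] for every u ∈ ℝ^N. -/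
open MeasureTheory ProbabilityTheory Matrix

/-- The standard Gaussian distribution `N(0, I_N)` on `ℝ^N`,
as the product of `N` standard normal distributions. -/
noncomputable def stdGaussianPi (N : ℕ) : Measure (Fin N → ℝ) :=
  Measure.pi fun _ => gaussianReal 0 1

/-- View a function `Fin N → ℝ` as an element of Euclidean space (with the `ℓ²` norm). -/
noncomputable def evec (N : ℕ) (x : Fin N → ℝ) : EuclideanSpace ℝ (Fin N) := WithLp.toLp 2 x

/-!
Translating the standard Gaussian `γ` by `h` multiplies it by the Cameron–Martin density
`ρ(h, v) = exp (⟪v, h⟫ - ‖h‖² / 2)`, so `ζ_δ(u) = ∫ ζ(δ v) ρ(u / δ, v) dγ(v)`: the variable `u`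
has moved from the merely Lipschitz `ζ` into the smooth density. Since `γ` has exponential
moments of all orders (Fernique) and `ζ` grows at most linearly, one may differentiate under the
integral sign, and undoing the translation in `∫ ζ(δ v) ρ(u / δ, v) (v - u / δ) dγ(v)` gives
`∫ ζ(u + δ v) v dγ(v)`.
-/

open Real
open scoped RealInnerProductSpace NNReal

theorem ProbabilityTheory.IsGaussian.integrable_exp_mul_norm {E : Type*} [NormedAddCommGroup E]
    [NormedSpace ℝ E] [CompleteSpace E] [SecondCountableTopology E] [MeasurableSpace E]
    [BorelSpace E] (μ : Measure E) [IsGaussian μ] (c : ℝ) :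
    Integrable (fun x => exp (c * ‖x‖)) μ := by
  obtain ⟨C, hC, hint⟩ := IsGaussian.exists_integrable_exp_sq μ
  -- `c t ≤ C t² + c² / (4 C)`
  refine (hint.const_mul (exp (c ^ 2 / (4 * C)))).mono' (by fun_prop) (ae_of_all _ fun x => ?_)
  rw [norm_of_nonneg (exp_pos _).le, ← exp_add]
  refine exp_le_exp.2 ?_
  rw [div_add' _ _ _ (by positivity), le_div_iff₀ (by positivity)]
  nlinarith [sq_nonneg (c - 2 * C * ‖x‖)]

theorem LipschitzWith.abs_le_mul_exp_norm {E : Type*} [SeminormedAddCommGroup E] {ζ : E → ℝ}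
    {K : ℝ≥0} (hζ : LipschitzWith K ζ) (x : E) : |ζ x| ≤ (|ζ 0| + K) * exp ‖x‖ := by
  have hlip := hζ.dist_le_mul x 0
  rw [Real.dist_eq, dist_zero_right] at hlip
  calc |ζ x| ≤ |ζ 0| + K * ‖x‖ := by linarith [abs_sub_abs_le_abs_sub (ζ x) (ζ 0)]
    _ ≤ |ζ 0| * exp ‖x‖ + K * exp ‖x‖ := by
        gcongr
        · exact le_mul_of_one_le_right (abs_nonneg _) (one_le_exp (norm_nonneg x))
        · linarith [add_one_le_exp ‖x‖]
    _ = (|ζ 0| + K) * exp ‖x‖ := (add_mul _ _ _).symm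

theorem HasGradientAt.comp_const_smul {F : Type*} [NormedAddCommGroup F] [InnerProductSpace ℝ F]
    [CompleteSpace F] {f : F → ℝ} {f' x : F} (c : ℝ) (hf : HasGradientAt f f' (c • x)) :
    HasGradientAt (fun x => f (c • x)) (c • f') x := by
  rw [hasGradientAt_iff_hasFDerivAt] at hf ⊢
  refine (hf.comp x ((hasFDerivAt_id x).const_smul c)).congr_fderiv ?_
  ext y
  simp

section GaussianDensity

variable {E : Type*} [NormedAddCommGroup E] [InnerProductSpace ℝ E]

variable (E) in
noncomputable def stdGaussianDensity (x : E) : ℝ :=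
  (2 * π) ^ (-(Module.finrank ℝ E / 2 : ℝ)) * exp (-2⁻¹ * ‖x‖ ^ 2)

noncomputable def cameronMartinDensity (h v : E) : ℝ := exp (⟪v, h⟫ - ‖h‖ ^ 2 / 2)

lemma stdGaussianDensity_nonneg (x : E) : 0 ≤ stdGaussianDensity E x := by
  unfold stdGaussianDensity; positivity

lemma continuous_stdGaussianDensity : Continuous (stdGaussianDensity E) := by
  unfold stdGaussianDensity; fun_prop

lemma stdGaussianDensity_sub (v h : E) :
    stdGaussianDensity E (v - h) = cameronMartinDensity h v * stdGaussianDensity E v := by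
  rw [stdGaussianDensity, stdGaussianDensity, cameronMartinDensity, mul_left_comm, ← exp_add,
    norm_sub_sq_real]
  ring_nf

lemma cameronMartinDensity_pos (h v : E) : 0 < cameronMartinDensity h v := exp_pos _

lemma continuous_cameronMartinDensity (h : E) : Continuous (cameronMartinDensity h) := by
  unfold cameronMartinDensity; fun_prop

lemma cameronMartinDensity_le {h : E} {R : ℝ} (hR : ‖h‖ ≤ R) (v : E) :
    cameronMartinDensity h v ≤ exp (R * ‖v‖) := by
  refine exp_le_exp.2 ?_
  nlinarith [real_inner_le_norm v h, norm_nonneg v, sq_nonneg ‖h‖]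

lemma norm_mul_cameronMartinDensity_smul_sub_le {a C c R : ℝ} {h v : E}
    (ha : |a| ≤ C * exp (c * ‖v‖)) (hR : ‖h‖ ≤ R) :
    ‖(a * cameronMartinDensity h v) • (v - h)‖ ≤ C * (1 + R) * exp ((c + R + 1) * ‖v‖) := by
  have hR0 : 0 ≤ R := (norm_nonneg h).trans hR
  have hC : 0 ≤ C * exp (c * ‖v‖) := (abs_nonneg a).trans ha
  have hsub : ‖v - h‖ ≤ (1 + R) * exp ‖v‖ := by
    nlinarith [norm_sub_le v h, add_one_le_exp ‖v‖, one_le_exp (norm_nonneg v)]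
  rw [norm_smul, norm_mul, Real.norm_eq_abs, norm_of_nonneg (cameronMartinDensity_pos h v).le]
  calc |a| * cameronMartinDensity h v * ‖v - h‖
      ≤ C * exp (c * ‖v‖) * exp (R * ‖v‖) * ((1 + R) * exp ‖v‖) :=
        mul_le_mul (mul_le_mul ha (cameronMartinDensity_le hR v)
          (cameronMartinDensity_pos h v).le hC) hsub (norm_nonneg _)
          (mul_nonneg hC (exp_pos _).le)
    _ = C * (1 + R) * exp ((c + R + 1) * ‖v‖) := by
        simp only [add_mul, one_mul, exp_add]
        ring

theorem hasGradientAt_cameronMartinDensity [CompleteSpace E] (h v : E) :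
    HasGradientAt (cameronMartinDensity · v) (cameronMartinDensity h v • (v - h)) h := by
  have hexp : HasFDerivAt (fun x => exp (innerSL ℝ v x - ‖x‖ ^ 2 * (1 / 2)))
      (exp (innerSL ℝ v h - ‖h‖ ^ 2 * (1 / 2))
        • (innerSL ℝ v - (1 / 2 : ℝ) • (2 • innerSL ℝ h))) h :=
    ((innerSL ℝ v).hasFDerivAt.sub
      ((hasStrictFDerivAt_norm_sq h).hasFDerivAt.mul_const (1 / 2 : ℝ))).exp
  have hfun : (cameronMartinDensity · v) = fun x => exp (innerSL ℝ v x - ‖x‖ ^ 2 * (1 / 2)) := by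
    funext x
    rw [cameronMartinDensity, innerSL_apply_apply, div_eq_mul_one_div]
  rw [hasGradientAt_iff_hasFDerivAt, hfun]
  refine hexp.congr_fderiv ?_
  ext w
  simp only [InnerProductSpace.toDual_apply_apply, _root_.smul_apply, _root_.sub_apply,
    innerSL_apply_apply, inner_smul_left, inner_sub_left, smul_eq_mul, nsmul_eq_mul, conj_trivial,
    cameronMartinDensity, ← div_eq_mul_one_div]
  ring

variable [FiniteDimensional ℝ E] [MeasurableSpace E] [BorelSpace E]

lemma integrable_stdGaussianDensity : Integrable (stdGaussianDensity E) := by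
  refine Integrable.of_integral_ne_zero ?_
  unfold stdGaussianDensity
  rw [integral_const_mul, GaussianFourier.integral_rexp_neg_mul_sq_norm (inv_pos.2 two_pos)]
  positivity

theorem stdGaussian_eq_withDensity :
    stdGaussian E = volume.withDensity fun x => ENNReal.ofReal (stdGaussianDensity E x) := by
  have := isFiniteMeasure_withDensity_ofReal (integrable_stdGaussianDensity (E := E)).2
  refine (Measure.ext_of_charFun (funext fun t => ?_)).symm
  rw [charFun_stdGaussian, charFun_apply, integral_withDensity_eq_integral_toReal_smul
    continuous_stdGaussianDensity.measurable.ennreal_ofReal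
    (ae_of_all _ fun _ => ENNReal.ofReal_lt_top)]
  have hpos : (0 : ℝ) < 2 * π := by positivity
  have hconst : (((2 * π) ^ (-(Module.finrank ℝ E / 2 : ℝ)) : ℝ) : ℂ)
      * ((π : ℂ) / 2⁻¹) ^ ((Module.finrank ℝ E : ℂ) / 2) = 1 := by
    have : ((π : ℂ) / 2⁻¹) ^ ((Module.finrank ℝ E : ℂ) / 2)
        = ((2 * π) ^ (Module.finrank ℝ E / 2 : ℝ) : ℝ) := by
      rw [Complex.ofReal_cpow hpos.le]; push_cast; ring_nf
    rw [this, ← Complex.ofReal_mul, ← rpow_add hpos, neg_add_cancel, rpow_zero,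
      Complex.ofReal_one]
  calc ∫ x, (ENNReal.ofReal (stdGaussianDensity E x)).toReal • Complex.exp (⟪x, t⟫ * Complex.I)
      = ∫ x, (((2 * π) ^ (-(Module.finrank ℝ E / 2 : ℝ)) : ℝ) : ℂ)
          * Complex.exp (-2⁻¹ * ‖x‖ ^ 2 + Complex.I * ⟪t, x⟫) := by
        refine integral_congr_ae (ae_of_all _ fun x => ?_)
        dsimp only
        rw [ENNReal.toReal_ofReal (stdGaussianDensity_nonneg x), stdGaussianDensity,
          Complex.real_smul, Complex.exp_add, real_inner_comm]
        push_cast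
        rw [mul_comm Complex.I]
        ring
    _ = Complex.exp (-‖t‖ ^ 2 / 2) := by
        rw [integral_const_mul, GaussianFourier.integral_cexp_neg_mul_sq_norm_add (by norm_num),
          ← mul_assoc, hconst, one_mul, Complex.I_sq]
        ring_nf

theorem integral_add_right_stdGaussian {F : Type*} [NormedAddCommGroup F] [NormedSpace ℝ F]
    (f : E → F) (h : E) :
    ∫ v, f (v + h) ∂stdGaussian E = ∫ v, cameronMartinDensity h v • f v ∂stdGaussian E := by
  simp_rw [stdGaussian_eq_withDensity, integral_withDensity_eq_integral_toReal_smul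
    continuous_stdGaussianDensity.measurable.ennreal_ofReal
    (ae_of_all _ fun _ => ENNReal.ofReal_lt_top),
    ENNReal.toReal_ofReal (stdGaussianDensity_nonneg _)]
  rw [← integral_sub_right_eq_self (fun v => stdGaussianDensity E v • f (v + h)) h]
  simp_rw [sub_add_cancel, stdGaussianDensity_sub, mul_smul,
    smul_comm (cameronMartinDensity h _)]

end GaussianDensity

section Smoothing

variable {E : Type*} [NormedAddCommGroup E] [InnerProductSpace ℝ E]

theorem hasGradientAt_integral_mul_cameronMartinDensity [CompleteSpace E]
    [SecondCountableTopology E] [MeasurableSpace E] [BorelSpace E] {μ : Measure E}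
    (hμ : ∀ c, Integrable (fun v => exp (c * ‖v‖)) μ) {g : E → ℝ} (hg : AEStronglyMeasurable g μ)
    {C c : ℝ} (hgC : ∀ v, |g v| ≤ C * exp (c * ‖v‖)) (h₀ : E) :
    HasGradientAt (fun h => ∫ v, g v * cameronMartinDensity h v ∂μ)
      (∫ v, (g v * cameronMartinDensity h₀ v) • (v - h₀) ∂μ) h₀ := by
  have hball : ∀ h ∈ Metric.ball h₀ 1, ‖h‖ ≤ ‖h₀‖ + 1 := fun h hh =>
    norm_le_of_mem_closedBall (Metric.ball_subset_closedBall hh)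
  have hF_int : Integrable (fun v => g v * cameronMartinDensity h₀ v) μ := by
    refine ((hμ (c + ‖h₀‖)).const_mul C).mono'
      (hg.mul (continuous_cameronMartinDensity h₀).aestronglyMeasurable)
      (ae_of_all _ fun v => ?_)
    rw [norm_mul, Real.norm_eq_abs, norm_of_nonneg (cameronMartinDensity_pos h₀ v).le, add_mul,
      exp_add, ← mul_assoc]
    exact mul_le_mul (hgC v) (cameronMartinDensity_le le_rfl v) (exp_pos _).le
      ((abs_nonneg _).trans (hgC v))
  have hderiv := hasFDerivAt_integral_of_dominated_of_fderiv_le (μ := μ)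
    (F' := fun h v => InnerProductSpace.toDual ℝ E ((g v * cameronMartinDensity h v) • (v - h)))
    (Metric.ball_mem_nhds h₀ one_pos)
    (Filter.Eventually.of_forall fun h =>
      hg.mul (continuous_cameronMartinDensity h).aestronglyMeasurable) hF_int
    ((InnerProductSpace.toDual ℝ E).continuous.comp_aestronglyMeasurable
      ((hg.mul (continuous_cameronMartinDensity h₀).aestronglyMeasurable).smul (by fun_prop)))
    (ae_of_all _ fun v h hh => by
      rw [LinearIsometryEquiv.norm_map]
      exact norm_mul_cameronMartinDensity_smul_sub_le (hgC v) (hball h hh))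
    ((hμ _).const_mul _)
    (ae_of_all _ fun v h _ =>
      ((hasGradientAt_cameronMartinDensity h v).hasFDerivAt.const_mul (g v)).congr_fderiv
        (by simp only [mul_smul, map_smul]))
  exact hasGradientAt_iff_hasFDerivAt.2 (hderiv.congr_fderiv
    ((InnerProductSpace.toDual ℝ E).toLinearIsometry.integral_comp_comm _))

variable [FiniteDimensional ℝ E] [MeasurableSpace E] [BorelSpace E]

theorem hasGradientAt_integral_comp_add_smul_stdGaussian {ζ : E → ℝ} {K : ℝ≥0}
    (hζ : LipschitzWith K ζ) {δ : ℝ} (hδ : δ ≠ 0) (u : E) :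
    HasGradientAt (fun u => ∫ v, ζ (u + δ • v) ∂stdGaussian E)
      (δ⁻¹ • ∫ v, ζ (u + δ • v) • v ∂stdGaussian E) u := by
  have hshift : ∀ u v : E, δ • (v + δ⁻¹ • u) = u + δ • v := fun u v => by
    rw [smul_add, smul_inv_smul₀ hδ, add_comm]
  have hfun : (fun u => ∫ v, ζ (u + δ • v) ∂stdGaussian E)
      = fun u => ∫ v, ζ (δ • v) * cameronMartinDensity (δ⁻¹ • u) v ∂stdGaussian E := by
    funext u
    simp_rw [← hshift u, integral_add_right_stdGaussian (fun v => ζ (δ • v)), smul_eq_mul,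
      mul_comm]
  have hgrad : ∫ v, (ζ (δ • v) * cameronMartinDensity (δ⁻¹ • u) v) • (v - δ⁻¹ • u) ∂stdGaussian E
      = ∫ v, ζ (u + δ • v) • v ∂stdGaussian E := by
    simp_rw [mul_comm (ζ _), mul_smul]
    rw [← integral_add_right_stdGaussian (fun v => ζ (δ • v) • (v - δ⁻¹ • u))]
    simp_rw [hshift, add_sub_cancel_right]
  have hgrowth : ∀ v : E, |ζ (δ • v)| ≤ (|ζ 0| + K) * exp (|δ| * ‖v‖) := fun v => by
    simpa only [norm_smul, Real.norm_eq_abs] using hζ.abs_le_mul_exp_norm (δ • v)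
  rw [hfun, ← hgrad]
  exact (hasGradientAt_integral_mul_cameronMartinDensity
    (IsGaussian.integrable_exp_mul_norm _)
    (hζ.continuous.comp (continuous_const_smul δ)).aestronglyMeasurable hgrowth
    (δ⁻¹ • u)).comp_const_smul δ⁻¹

end Smoothing

theorem integral_stdGaussianPi_comp_evec {F : Type*} [NormedAddCommGroup F] [NormedSpace ℝ F]
    (N : ℕ) (f : EuclideanSpace ℝ (Fin N) → F) :
    ∫ w, f (evec N w) ∂stdGaussianPi N = ∫ v, f v ∂stdGaussian (EuclideanSpace ℝ (Fin N)) := by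
  rw [← map_pi_eq_stdGaussian]
  exact ((MeasurableEquiv.toLp 2 _).measurableEmbedding.integral_map f).symm

theorem gaussian_smoothing_gradient_general
    (N : ℕ) (L0 δ : ℝ) (hδ : 0 < δ)
    (ζ : EuclideanSpace ℝ (Fin N) → ℝ)
    (hLip : ∀ x y, |ζ x - ζ y| ≤ L0 * ‖x - y‖) :
    let ζδ : EuclideanSpace ℝ (Fin N) → ℝ :=
      fun u => ∫ w, ζ (u + δ • evec N w) ∂(stdGaussianPi N)
    Differentiable ℝ ζδ ∧
      ∀ u, gradient ζδ u =
        δ⁻¹ • ∫ w, ζ (u + δ • evec N w) • evec N w ∂(stdGaussianPi N) := by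
  intro ζδ
  have hζ : LipschitzWith ‖L0‖₊ ζ := LipschitzWith.of_dist_le_mul fun x y => by
    rw [Real.dist_eq, dist_eq_norm, coe_nnnorm, Real.norm_eq_abs]
    exact (hLip x y).trans (mul_le_mul_of_nonneg_right (le_abs_self L0) (norm_nonneg _))
  have hgrad : ∀ u, HasGradientAt ζδ
      (δ⁻¹ • ∫ w, ζ (u + δ • evec N w) • evec N w ∂(stdGaussianPi N)) u := fun u => by
    rw [integral_stdGaussianPi_comp_evec N (fun v => ζ (u + δ • v) • v)]
    refine HasGradientAt.congr_of_eventuallyEq ?_ (Filter.Eventually.of_forall fun u =>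
      integral_stdGaussianPi_comp_evec N (fun v => ζ (u + δ • v)))
    exact hasGradientAt_integral_comp_add_smul_stdGaussian hζ hδ.ne' u
  exact ⟨fun u => (hgrad u).differentiableAt, fun u => (hgrad u).gradient⟩

/-- Gaussian smoothing of a Lipschitz function is differentiable, with gradient
`∇ζ_δ(u) = (1/δ) E[ζ(u + δ v) v]`. -/
theorem gaussian_smoothing_gradient
    (N : ℕ) (hN : 1 ≤ N) (L0 δ : ℝ) (hδ : 0 < δ)
    (ζ : EuclideanSpace ℝ (Fin N) → ℝ)
    (hLip : ∀ x y, |ζ x - ζ y| ≤ L0 * ‖x - y‖) :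
    let ζδ : EuclideanSpace ℝ (Fin N) → ℝ :=
      fun u => ∫ w, ζ (u + δ • evec N w) ∂(stdGaussianPi N)
    Differentiable ℝ ζδ ∧
      ∀ u, gradient ζδ u =
        δ⁻¹ • ∫ w, ζ (u + δ • evec N w) • evec N w ∂(stdGaussianPi N) :=
  gaussian_smoothing_gradient_general N L0 δ hδ ζ hLip
end
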